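/- Conversely, if the interdicted edges { (i,j) : x_{ij} = 1 } form a connected subgraph with k edges and m ≤ k + 1 incident vertices, then there exist binary y, a choice of dummy edge x_{κi*} = 1 for some vertex i* of the subgraph, and nonnegative flows δ with δ_{κi*} = m ≤ k + 1 and δ_{ij}, δ_{ji} ≤ k on interdicted edges (zero elsewhere) satisfying the flow-balance constraints Σ_j (δ_{ji} − δ_{ij}) = y_i − δ_{κi} for all i. -/

import Mathlib

/-!
Pick an endpoint `i*` of an interdicted line and route one unit from `i*` to every other endpoint
along a path of the interdicted subgraph. The sum of these path flows has net inflow `y_i` at every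
bus except `i*`, where the source `δ_{κi*} = m` enters, and since a path uses each directed edge at
most once it carries at most `m - 1 ≤ k` on every edge. The flow on a directed pair `(a, b)` is then
booked on whichever of the lines `(a, b)`, `(b, a)` is interdicted, as forward flow `δf` or as
reverse flow `δr`.
-/

open Finset

/-- The subgraph formed by the interdicted lines `{(i,j) : x_{ij} = 1}`. -/
def interdictedGraph {nb : ℕ} (E : Finset (Fin nb × Fin nb))
    (x : Fin nb × Fin nb → ℝ) : SimpleGraph (Fin nb) where
  Adj a b := a ≠ b ∧ (((a, b) ∈ E ∧ x (a, b) = 1) ∨ ((b, a) ∈ E ∧ x (b, a) = 1))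
  symm := by
    constructor
    intro a b h
    exact ⟨h.1.symm, h.2.symm⟩
  loopless := by
    constructor
    intro a h
    exact h.1 rfl

open SimpleGraph

section NetInflow

variable {V R : Type*} [Fintype V] [AddCommGroup R]

def netInflow (f : V × V → R) (i : V) : R := ∑ a, f (a, i) - ∑ b, f (i, b)

lemma netInflow_add (f g : V × V → R) (i : V) :
    netInflow (f + g) i = netInflow f i + netInflow g i := by
  simp only [netInflow, Pi.add_apply, sum_add_distrib]
  abel

lemma netInflow_comp_swap (f : V × V → R) (i : V) :
    netInflow (f ∘ Prod.swap) i = -netInflow f i := by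
  simp [netInflow]

lemma netInflow_sum {ι : Type*} (s : Finset ι) (f : ι → V × V → R) (i : V) :
    netInflow (∑ v ∈ s, f v) i = ∑ v ∈ s, netInflow (f v) i := by
  simp only [netInflow, Finset.sum_apply, sum_sub_distrib]
  rw [sum_comm, sum_comm (s := univ)]

lemma netInflow_eq_sub_of_add_swap {f g C : V × V → R} (h : ∀ z, f z + g z.swap = C z)
    (i : V) : netInflow C i = netInflow f i - netInflow g i := by
  have hC : C = f + g ∘ Prod.swap := funext fun z => (h z).symm
  rw [hC, netInflow_add, netInflow_comp_swap, sub_eq_add_neg]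

lemma netInflow_eq_sum_filter [DecidableEq V] (E : Finset (V × V)) {g : V × V → R}
    (hg : ∀ e ∉ E, g e = 0) (i : V) :
    netInflow g i = ∑ e ∈ E.filter (·.2 = i), g e - ∑ e ∈ E.filter (·.1 = i), g e := by
  have hext : ∀ p : V × V → Prop, [DecidablePred p] →
      ∑ e ∈ E.filter p, g e = ∑ e, if p e then g e else 0 := fun p _ => by
    rw [sum_filter]
    exact sum_subset (subset_univ E) fun e _ he => by simp [hg e he]
  rw [hext, hext, Fintype.sum_prod_type, Fintype.sum_prod_type_right]
  simp only [sum_ite_eq', mem_univ, if_true, netInflow]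

end NetInflow

namespace SimpleGraph.Walk

variable {V : Type*} [DecidableEq V] {G : SimpleGraph V} {u v : V}

def dartCount (p : G.Walk u v) (z : V × V) : ℕ := (p.darts.map Dart.toProd).count z

lemma adj_of_dartCount_ne_zero (p : G.Walk u v) {z : V × V} (hz : p.dartCount z ≠ 0) :
    G.Adj z.1 z.2 := by
  obtain ⟨d, -, rfl⟩ := List.mem_map.mp (List.count_pos_iff.mp (Nat.pos_of_ne_zero hz))
  exact d.adj

lemma IsPath.dartCount_le_one {p : G.Walk u v} (hp : p.IsPath) (z : V × V) :
    p.dartCount z ≤ 1 :=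
  List.nodup_iff_count_le_one.mp
    ((darts_nodup_of_support_nodup hp.support_nodup).map Dart.toProd_injective) z

lemma netInflow_dartCount [Fintype V] {R : Type*} [CommRing R] (p : G.Walk u v) (i : V) :
    netInflow (fun z => (p.dartCount z : R)) i =
      (if v = i then 1 else 0) - if u = i then 1 else 0 := by
  induction p with
  | nil => simp [netInflow, dartCount]
  | @cons u w v h q ih =>
    simp only [netInflow, dartCount, darts_cons, List.map_cons, List.count_cons, beq_iff_eq,
      Nat.cast_add, Nat.cast_ite, Nat.cast_one, Nat.cast_zero, sum_add_distrib] at ih ⊢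
    simp only [Prod.mk.injEq, ite_and, sum_ite_irrel, sum_ite_eq, mem_univ, if_true,
      sum_const_zero]
    linear_combination ih

end SimpleGraph.Walk

namespace SimpleGraph

variable {V : Type*} [Fintype V] [DecidableEq V] {G : SimpleGraph V}

theorem exists_flow_from_root {r : V} {S : Finset V} (hr : r ∈ S)
    (hS : ∀ v ∈ S, G.Reachable r v) :
    ∃ C : V × V → ℝ, (∀ z, 0 ≤ C z ∧ C z ≤ #S - 1) ∧ (∀ z, C z ≠ 0 → G.Adj z.1 z.2) ∧
      ∀ i, netInflow C i = (if i ∈ S then 1 else 0) - if i = r then (#S : ℝ) else 0 := by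
  choose p hp using fun v : S.erase r => (hS v (mem_of_mem_erase v.2)).exists_isPath
  refine ⟨∑ v, fun z => ((p v).dartCount z : ℝ), fun z => ⟨?_, ?_⟩, fun z hz => ?_,
    fun i => ?_⟩
  · rw [Finset.sum_apply]
    positivity
  · calc (∑ v, fun z => ((p v).dartCount z : ℝ)) z
        ≤ ∑ _v : S.erase r, (1 : ℝ) := by
          rw [Finset.sum_apply]
          exact sum_le_sum fun v _ => by exact_mod_cast (hp v).dartCount_le_one z
      _ = #S - 1 := by simp [card_erase_of_mem hr, Nat.cast_sub (card_pos.mpr ⟨r, hr⟩)]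
  · rw [Finset.sum_apply] at hz
    obtain ⟨v, -, hv⟩ := exists_ne_zero_of_sum_ne_zero hz
    exact (p v).adj_of_dartCount_ne_zero (by exact_mod_cast hv)
  · simp only [netInflow_sum, Walk.netInflow_dartCount, sum_sub_distrib]
    rw [sum_coe_sort (S.erase r) fun v => if v = i then (1 : ℝ) else 0, sum_ite_eq']
    by_cases hi : i = r
    · subst hi
      simp [hr, card_erase_of_mem hr, Nat.cast_sub (card_pos.mpr ⟨i, hr⟩)]
    · simp [hi, Ne.symm hi]

end SimpleGraph

section Orientation

variable {V R : Type*} [DecidableEq V] [AddCommGroup R] (A : Finset (V × V)) (C : V × V → R)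

def forwardPart (e : V × V) : R := if e ∈ A then C e else 0

/-- Flow against an oriented edge of `A` is booked on that edge only when its reverse is not
itself in `A`, so that no flow is counted twice. -/
def reversePart (e : V × V) : R := if e ∈ A ∧ e.swap ∉ A then C e.swap else 0

variable {A C}

lemma forwardPart_add_reversePart_swap (hC : ∀ z, C z ≠ 0 → z ∈ A ∨ z.swap ∈ A) (z : V × V) :
    forwardPart A C z + reversePart A C z.swap = C z := by
  by_cases hz : z ∈ A
  · simp [forwardPart, reversePart, hz]
  · by_cases hz' : z.swap ∈ A
    · simp [forwardPart, reversePart, hz, hz']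
    · simp [forwardPart, reversePart, hz, hz', not_imp_comm.mp (hC z) (by tauto)]

lemma forwardPart_of_notMem {e : V × V} (he : e ∉ A) : forwardPart A C e = 0 := if_neg he

lemma reversePart_of_notMem {e : V × V} (he : e ∉ A) : reversePart A C e = 0 :=
  if_neg fun h => he h.1

lemma forwardPart_mem {s : Set R} (h0 : 0 ∈ s) (hC : ∀ z, C z ∈ s) (e : V × V) :
    forwardPart A C e ∈ s := by
  unfold forwardPart
  split_ifs <;> simp [*]

lemma reversePart_mem {s : Set R} (h0 : 0 ∈ s) (hC : ∀ z, C z ∈ s) (e : V × V) :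
    reversePart A C e ∈ s := by
  unfold reversePart
  split_ifs <;> simp [*]

end Orientation

theorem connected_implies_topological_flow_general
    {nb : ℕ} (E : Finset (Fin nb × Fin nb)) (k : ℕ) (hk1 : 1 ≤ k)
    (x : Fin nb × Fin nb → ℝ) (y : Fin nb → ℝ)
    (hxbin : ∀ e, x e = 0 ∨ x e = 1)
    (hknum : ∑ e ∈ E, x e = (k : ℝ))
    -- y_i = 1 iff bus i is an endpoint of some interdicted line
    (hy : ∀ i, (y i = 1 ↔ ∃ e ∈ E, x e = 1 ∧ (e.1 = i ∨ e.2 = i)) ∧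
               (y i = 0 ∨ y i = 1))
    -- the interdicted subgraph is connected: any two endpoints are reachable
    (hconn : ∀ u v : Fin nb, y u = 1 → y v = 1 →
      (interdictedGraph E x).Reachable u v)
    -- a connected graph with k edges has at most k + 1 incident vertices
    (hcard : (Finset.univ.filter (fun i => y i = 1)).card ≤ k + 1) :
    ∃ (istar : Fin nb) (xκ : Fin nb → ℝ)
      (δf δr : Fin nb × Fin nb → ℝ) (δκ : Fin nb → ℝ),
      y istar = 1 ∧ xκ istar = 1 ∧ (∀ i, xκ i = 0 ∨ xκ i = 1) ∧
      (∑ i, xκ i) = 1 ∧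
      δκ istar = ∑ i, y i ∧ δκ istar ≤ (k : ℝ) + 1 ∧
      (∀ i, 0 ≤ δκ i ∧ δκ i ≤ ((k : ℝ) + 1) * xκ i) ∧
      (∀ e ∈ E, (0 ≤ δf e ∧ δf e ≤ (k : ℝ) * x e) ∧
                 (0 ≤ δr e ∧ δr e ≤ (k : ℝ) * x e)) ∧
      (∀ e, e ∉ E → δf e = 0 ∧ δr e = 0) ∧
      (∀ i : Fin nb,
        ((∑ e ∈ E.filter (fun e => e.2 = i), δf e) +
         (∑ e ∈ E.filter (fun e => e.1 = i), δr e)) -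
        ((∑ e ∈ E.filter (fun e => e.1 = i), δf e) +
         (∑ e ∈ E.filter (fun e => e.2 = i), δr e)) = y i - δκ i) := by
  set A := E.filter fun e => x e = 1
  set S := univ.filter fun i => y i = 1
  have hyS (i : Fin nb) : y i = if i ∈ S then 1 else 0 := by
    rcases (hy i).2 with h | h <;> simp [S, h]
  obtain ⟨e₀, he₀, hxe₀⟩ : ∃ e ∈ E, x e = 1 := by
    have hsum : ∑ e ∈ E, x e ≠ 0 := hknum ▸ by positivity
    obtain ⟨e, he, hxe⟩ := exists_ne_zero_of_sum_ne_zero hsum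
    exact ⟨e, he, (hxbin e).resolve_left hxe⟩
  have hr : y e₀.1 = 1 := (hy e₀.1).1.mpr ⟨e₀, he₀, hxe₀, .inl rfl⟩
  obtain ⟨C, hCbd, hCadj, hCflow⟩ := exists_flow_from_root (G := interdictedGraph E x)
    (S := S) (by simpa [S] using hr) fun v hv => hconn _ _ hr (by simpa [S] using hv)
  have hCA (z : Fin nb × Fin nb) (hz : C z ≠ 0) : z ∈ A ∨ z.swap ∈ A := by
    simpa [A, interdictedGraph, Prod.swap] using (hCadj z hz).2
  have hS : (#S : ℝ) ≤ k + 1 := by exact_mod_cast hcard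
  have hCk (z : Fin nb × Fin nb) : C z ∈ Set.Icc (0 : ℝ) k :=
    ⟨(hCbd z).1, by linarith [(hCbd z).2]⟩
  have hbound (g : Fin nb × Fin nb → ℝ) (hg : ∀ z, g z ∈ Set.Icc (0 : ℝ) k)
      (hgA : ∀ e ∉ A, g e = 0) (e : Fin nb × Fin nb) : 0 ≤ g e ∧ g e ≤ k * x e := by
    by_cases he : e ∈ A
    · simpa [(mem_filter.mp he).2] using hg e
    · rcases hxbin e with h | h <;> simp [hgA e he, h]
  have hoffA : ∀ e ∉ E, e ∉ A := fun e he h => he (mem_filter.mp h).1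
  refine ⟨e₀.1, fun i => if i = e₀.1 then 1 else 0, forwardPart A C, reversePart A C,
    fun i => if i = e₀.1 then (#S : ℝ) else 0, hr, by simp, fun i => ?_, by simp, by simp [hyS],
    by simpa using hS, fun i => ?_, fun e _ => ⟨?_, ?_⟩, fun e he => ⟨?_, ?_⟩, fun i => ?_⟩
  · by_cases i = e₀.1 <;> simp [*]
  · by_cases h : i = e₀.1 <;> simp [h, hS]
  · exact hbound _ (forwardPart_mem (by simp) hCk) (fun _ => forwardPart_of_notMem) e
  · exact hbound _ (reversePart_mem (by simp) hCk) (fun _ => reversePart_of_notMem) e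
  · exact forwardPart_of_notMem (hoffA e he)
  · exact reversePart_of_notMem (hoffA e he)
  · have hflow := netInflow_eq_sub_of_add_swap (forwardPart_add_reversePart_swap hCA) i
    rw [hCflow, netInflow_eq_sum_filter E (fun e he => forwardPart_of_notMem (hoffA e he)),
      netInflow_eq_sum_filter E (fun e he => reversePart_of_notMem (hoffA e he)), ← hyS] at hflow
    linarith

/-- Conversely: if the interdicted edges form a connected subgraph with `k ≥ 1`
edges and at most `k + 1` incident vertices, then there is a choice of dummy
edge at some incident vertex `i*` and nonnegative flows `δ` (supported on the
interdicted edges, with `δ_{κi*} = Σ_i y_i ≤ k + 1` and `δ ≤ k` on interdicted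
edges, zero elsewhere) satisfying all the single-commodity flow-balance
constraints. -/
theorem connected_implies_topological_flow
    {nb : ℕ} (E : Finset (Fin nb × Fin nb)) (k : ℕ) (hk1 : 1 ≤ k)
    (x : Fin nb × Fin nb → ℝ) (y : Fin nb → ℝ)
    (hxbin : ∀ e, x e = 0 ∨ x e = 1)
    (hknum : ∑ e ∈ E, x e = (k : ℝ))
    (hxsupp : ∀ e, x e = 1 → e ∈ E)
    -- y_i = 1 iff bus i is an endpoint of some interdicted line
    (hy : ∀ i, (y i = 1 ↔ ∃ e ∈ E, x e = 1 ∧ (e.1 = i ∨ e.2 = i)) ∧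
               (y i = 0 ∨ y i = 1))
    -- the interdicted subgraph is connected: any two endpoints are reachable
    (hconn : ∀ u v : Fin nb, y u = 1 → y v = 1 →
      (interdictedGraph E x).Reachable u v)
    -- a connected graph with k edges has at most k + 1 incident vertices
    (hcard : (Finset.univ.filter (fun i => y i = 1)).card ≤ k + 1) :
    ∃ (istar : Fin nb) (xκ : Fin nb → ℝ)
      (δf δr : Fin nb × Fin nb → ℝ) (δκ : Fin nb → ℝ),
      y istar = 1 ∧ xκ istar = 1 ∧ (∀ i, xκ i = 0 ∨ xκ i = 1) ∧
      (∑ i, xκ i) = 1 ∧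
      δκ istar = ∑ i, y i ∧ δκ istar ≤ (k : ℝ) + 1 ∧
      (∀ i, 0 ≤ δκ i ∧ δκ i ≤ ((k : ℝ) + 1) * xκ i) ∧
      (∀ e ∈ E, (0 ≤ δf e ∧ δf e ≤ (k : ℝ) * x e) ∧
                 (0 ≤ δr e ∧ δr e ≤ (k : ℝ) * x e)) ∧
      (∀ e, e ∉ E → δf e = 0 ∧ δr e = 0) ∧
      (∀ i : Fin nb,
        ((∑ e ∈ E.filter (fun e => e.2 = i), δf e) +
         (∑ e ∈ E.filter (fun e => e.1 = i), δr e)) -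
        ((∑ e ∈ E.filter (fun e => e.1 = i), δf e) +
         (∑ e ∈ E.filter (fun e => e.2 = i), δr e)) = y i - δκ i) :=
  connected_implies_topological_flow_general E k hk1 x y hxbin hknum hy hconn hcard
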